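/- arXiv:math/0608645 — 3 statements merged into one kernel-verified Lean document; each statement's English description precedes it below -/
import Mathlib

section
/- For every positive integer a, o(2a) = o(a) + a, where o(g) = g − l(g). -/
/-!
Doubling every term of a representation shows `ell (2 * g) ≤ ell g`. Conversely, take a
representation of `2 * g`. If all its terms are even, halving them represents `g` with as many
terms. Otherwise, since the sum is even, it has two odd terms; these lie in `{1, 3}`, so their sum
lies in `{2, 4, 6} = {1 * 2, 1 * 4, 3 * 2}` and replaces them by a single term, which shortens the
representation of `2 * g`. Hence `ell (2 * g) = ell g`, and `obj (2 * a) = obj a + a` follows from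
`ell a ≤ a`.
-/

noncomputable def ell (g : ℕ) : ℕ :=
  sInf {k | ∃ a n : Fin k → ℕ, (∀ i, a i = 1 ∨ a i = 3) ∧ g = ∑ i, a i * 2 ^ n i}

noncomputable def obj (g : ℕ) : ℕ := g - ell g

def IsTerm (t : ℕ) : Prop := ∃ c n : ℕ, (c = 1 ∨ c = 3) ∧ t = c * 2 ^ n

namespace IsTerm

variable {t u : ℕ}

lemma two_mul (ht : IsTerm t) : IsTerm (2 * t) := by
  obtain ⟨c, n, hc, rfl⟩ := ht
  exact ⟨c, n + 1, hc, by ring⟩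

lemma of_two_mul (ht : IsTerm (2 * t)) : IsTerm t := by
  obtain ⟨c, _ | n, hc, h⟩ := ht
  · omega
  · exact ⟨c, n, hc, by rw [pow_succ] at h; linarith⟩

lemma eq_one_or_eq_three_of_odd (ht : IsTerm t) (hodd : Odd t) : t = 1 ∨ t = 3 := by
  obtain ⟨c, _ | n, hc, rfl⟩ := ht
  · simpa using hc
  · exact absurd hodd (by simp [pow_succ, Nat.not_odd_iff_even])

lemma add_of_odd (ht : IsTerm t) (hu : IsTerm u) (hto : Odd t) (huo : Odd u) :
    IsTerm (t + u) := by
  rcases ht.eq_one_or_eq_three_of_odd hto with rfl | rfl <;>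
    rcases hu.eq_one_or_eq_three_of_odd huo with rfl | rfl
  exacts [⟨1, 1, by norm_num⟩, ⟨1, 2, by norm_num⟩, ⟨1, 2, by norm_num⟩, ⟨3, 1, by norm_num⟩]

end IsTerm

def SumOfTerms (g k : ℕ) : Prop :=
  ∃ s : Multiset ℕ, Multiset.card s = k ∧ (∀ t ∈ s, IsTerm t) ∧ s.sum = g

lemma sumOfTerms_iff (g k : ℕ) :
    SumOfTerms g k ↔
      ∃ a n : Fin k → ℕ, (∀ i, a i = 1 ∨ a i = 3) ∧ g = ∑ i, a i * 2 ^ n i := by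
  constructor
  · rintro ⟨s, rfl, hs, rfl⟩
    obtain ⟨l, rfl⟩ : ∃ l : List ℕ, (l : Multiset ℕ) = s := ⟨s.toList, Multiset.coe_toList s⟩
    choose a n ha hl using fun i : Fin l.length => hs _ (List.getElem_mem i.isLt)
    refine ⟨a, n, ha, ?_⟩
    rw [Multiset.sum_coe, ← Fin.sum_univ_getElem l]
    exact Finset.sum_congr rfl fun i _ => hl i
  · rintro ⟨a, n, ha, rfl⟩
    exact ⟨Finset.univ.val.map (fun i => a i * 2 ^ n i), by simp,
      by simpa using fun i => ⟨a i, n i, ha i, rfl⟩, rfl⟩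

lemma sumOfTerms_self (g : ℕ) : SumOfTerms g g :=
  ⟨Multiset.replicate g 1, Multiset.card_replicate g 1,
    fun t ht => (Multiset.eq_of_mem_replicate ht) ▸ ⟨1, 0, Or.inl rfl, rfl⟩, by simp⟩

lemma ell_eq_sInf (g : ℕ) : ell g = sInf {k | SumOfTerms g k} := by
  simp only [sumOfTerms_iff]
  rfl

lemma ell_le {g k : ℕ} (h : SumOfTerms g k) : ell g ≤ k :=
  ell_eq_sInf g ▸ Nat.sInf_le h

lemma sumOfTerms_ell (g : ℕ) : SumOfTerms g (ell g) := by
  rw [ell_eq_sInf]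
  exact Nat.sInf_mem (s := {k | SumOfTerms g k}) ⟨g, sumOfTerms_self g⟩

lemma ell_le_self (g : ℕ) : ell g ≤ g := ell_le (sumOfTerms_self g)

namespace SumOfTerms

variable {g k : ℕ}

lemma two_mul (h : SumOfTerms g k) : SumOfTerms (2 * g) k := by
  obtain ⟨s, hk, hs, rfl⟩ := h
  refine ⟨s.map (2 * ·), by simpa using hk, ?_, ?_⟩
  · simpa using fun t ht => (hs t ht).two_mul
  · rw [Multiset.sum_map_mul_left, Multiset.map_id']

lemma of_forall_even {s : Multiset ℕ} (hs : ∀ t ∈ s, IsTerm t) (heven : ∀ t ∈ s, Even t) :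
    SumOfTerms (s.sum / 2) (Multiset.card s) := by
  have hdouble : 2 * (s.map (· / 2)).sum = s.sum := by
    rw [← Multiset.sum_map_mul_left]
    conv_rhs => rw [← Multiset.map_id' s]
    exact congrArg _ (Multiset.map_congr rfl fun t ht => Nat.two_mul_div_two_of_even (heven t ht))
  refine ⟨s.map (· / 2), Multiset.card_map _ _, ?_, by omega⟩
  simp only [Multiset.mem_map]
  rintro _ ⟨t, ht, rfl⟩
  refine IsTerm.of_two_mul ?_
  rw [Nat.two_mul_div_two_of_even (heven t ht)]
  exact hs t ht

lemma merge_odd {s : Multiset ℕ} (hs : ∀ t ∈ s, IsTerm t) (heven : Even s.sum) {t : ℕ}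
    (ht : t ∈ s) (hodd : Odd t) : SumOfTerms s.sum (Multiset.card s - 1) := by
  obtain ⟨s₁, rfl⟩ := Multiset.exists_cons_of_mem ht
  have hs₁ : ∀ v ∈ s₁, IsTerm v := fun v hv => hs v (Multiset.mem_cons_of_mem hv)
  obtain ⟨u, hu, hodd'⟩ : ∃ u ∈ s₁, Odd u := by
    by_contra! hall
    have hdvd : 2 ∣ s₁.sum := Multiset.dvd_sum fun v hv => (Nat.not_odd_iff_even.mp (hall v hv)).two_dvd
    rw [Multiset.sum_cons] at heven
    exact Nat.not_even_iff_odd.mpr (Odd.add_even hodd (even_iff_two_dvd.mpr hdvd)) heven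
  obtain ⟨s₂, rfl⟩ := Multiset.exists_cons_of_mem hu
  refine ⟨(t + u) ::ₘ s₂, by simp, ?_, by simp [add_assoc]⟩
  simp only [Multiset.mem_cons, forall_eq_or_imp]
  exact ⟨(hs t (by simp)).add_of_odd (hs₁ u (by simp)) hodd hodd',
    fun v hv => hs₁ v (Multiset.mem_cons_of_mem hv)⟩

lemma of_two_mul (h : SumOfTerms (2 * g) k) : ∃ k' ≤ k, SumOfTerms g k' := by
  induction k using Nat.strong_induction_on with
  | _ k ih =>
    obtain ⟨s, rfl, hs, hsum⟩ := h
    by_cases heven : ∀ t ∈ s, Even t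
    · exact ⟨_, le_rfl, by simpa [hsum] using of_forall_even hs heven⟩
    · push Not at heven
      obtain ⟨t, ht, hodd⟩ := heven
      have hpos : 0 < Multiset.card s := Multiset.card_pos_iff_exists_mem.mpr ⟨t, ht⟩
      obtain ⟨k', hk', h'⟩ := ih _ (by omega)
        (hsum ▸ merge_odd hs (hsum ▸ even_two_mul g) ht (Nat.not_even_iff_odd.mp hodd))
      exact ⟨k', by omega, h'⟩

end SumOfTerms

lemma ell_two_mul (g : ℕ) : ell (2 * g) = ell g := by
  refine le_antisymm (ell_le (sumOfTerms_ell g).two_mul) ?_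
  obtain ⟨k, hk, h⟩ := (sumOfTerms_ell (2 * g)).of_two_mul
  exact (ell_le h).trans hk

theorem stmt4_general (a : ℕ) : obj (2 * a) = obj a + a := by
  have := ell_le_self a
  simp only [obj, ell_two_mul]
  omega

theorem stmt4 (a : ℕ) (ha : 0 < a) : obj (2 * a) = obj a + a :=
  stmt4_general a
end

section
/- For every positive integer k, k < 2^{o(⌈2k/3⌉ + 1)}. -/
lemma ell_le_s11 (g m : ℕ)
    (h : ∃ a n : Fin m → ℕ, (∀ i, a i = 1 ∨ a i = 3) ∧ g = ∑ i, a i * 2 ^ n i) :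
    ell g ≤ m := Nat.sInf_le h

lemma ell_spec (g : ℕ) :
    ∃ a n : Fin (ell g) → ℕ, (∀ i, a i = 1 ∨ a i = 3) ∧ g = ∑ i, a i * 2 ^ n i := by
  have hne : g ∈ {k | ∃ a n : Fin k → ℕ, (∀ i, a i = 1 ∨ a i = 3) ∧ g = ∑ i, a i * 2 ^ n i} :=
    ⟨fun _ => 1, fun _ => 0, fun i => Or.inl rfl, by simp⟩
  exact Nat.sInf_mem ⟨g, hne⟩

lemma ell_even (q : ℕ) : ell (2 * q) ≤ ell q := by
  obtain ⟨a, n, ha, hs⟩ := ell_spec q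
  refine ell_le_s11 _ _ ⟨a, fun i => n i + 1, ha, ?_⟩
  have h2 : ∑ i, a i * 2 ^ ((fun i => n i + 1) i) = 2 * ∑ i, a i * 2 ^ n i := by
    rw [Finset.mul_sum]; exact Finset.sum_congr rfl fun i _ => by ring
  rw [h2, ← hs]

lemma ell_odd (q : ℕ) : ell (2 * q + 1) ≤ ell q + 1 := by
  obtain ⟨a, n, ha, hs⟩ := ell_spec q
  refine ell_le_s11 _ _ ⟨Fin.cons 1 a, Fin.cons 0 (fun i => n i + 1), ?_, ?_⟩
  · intro i
    refine Fin.cases (Or.inl rfl) (fun j => ha j) i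
  · have h2 : ∑ i : Fin (ell q + 1),
        Fin.cons 1 a i * 2 ^ Fin.cons 0 (fun i => n i + 1) i
        = 1 + 2 * ∑ i, a i * 2 ^ n i := by
      rw [Fin.sum_univ_succ]
      simp only [Fin.cons_zero, Fin.cons_succ, Finset.mul_sum]
      norm_num
      exact Finset.sum_congr rfl fun i _ => by ring
    rw [h2, ← hs]; ring

lemma lt_of_ell_le {k g c : ℕ} (h : ell g ≤ c) (h2 : k < 2 ^ (g - c)) :
    k < 2 ^ (g - ell g) :=
  h2.trans_le (Nat.pow_le_pow_right (by norm_num) (Nat.sub_le_sub_left h g))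

lemma bound_of_le {g c : ℕ} (h : ell g ≤ c) (h2 : 3 * g ≤ 2 ^ (g - c)) :
    3 * g ≤ 2 ^ (g - ell g) :=
  h2.trans (Nat.pow_le_pow_right (by norm_num) (Nat.sub_le_sub_left h g))

lemma Dlem : ∀ g, 7 ≤ g → 3 * g ≤ 2 ^ (g - ell g) := by
  intro g
  induction g using Nat.strong_induction_on with
  | _ g ih =>
    intro hg
    rcases Nat.even_or_odd g with ⟨q, hq⟩ | ⟨q, hq⟩
    · -- g = q + q
      by_cases hq7 : 7 ≤ q
      · have h1 : ell g ≤ ell q := by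
          rw [show g = 2 * q by omega]; exact ell_even q
        have h2 := ih q (by omega) hq7
        have h3 : ell q ≤ q := ell_le_self q
        have h4 : q + (q - ell q) ≤ g - ell g := by omega
        have h5 : 2 ^ (q + (q - ell q)) ≤ 2 ^ (g - ell g) :=
          Nat.pow_le_pow_right (by norm_num) h4
        have h6 : (4 : ℕ) ≤ 2 ^ q := by
          calc (4 : ℕ) = 2 ^ 2 := by norm_num
            _ ≤ 2 ^ q := Nat.pow_le_pow_right (by norm_num) (by omega)
        rw [pow_add] at h5
        nlinarith
      · have hgle : g ≤ 12 := by omega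
        interval_cases g
        · omega
        · exact bound_of_le (ell_le_s11 8 1 ⟨![1], ![3], by decide, by decide⟩) (by norm_num)
        · omega
        · exact bound_of_le (ell_le_s11 10 2 ⟨![1, 1], ![1, 3], by decide, by decide⟩) (by norm_num)
        · omega
        · exact bound_of_le (ell_le_s11 12 1 ⟨![3], ![2], by decide, by decide⟩) (by norm_num)
    · -- g = 2q+1
      by_cases hq7 : 7 ≤ q
      · have h1 : ell g ≤ ell q + 1 := by
          rw [hq]; exact ell_odd q
        have h2 := ih q (by omega) hq7
        have h3 : ell q ≤ q := ell_le_self q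
        have h4 : q + (q - ell q) ≤ g - ell g := by omega
        have h5 : 2 ^ (q + (q - ell q)) ≤ 2 ^ (g - ell g) :=
          Nat.pow_le_pow_right (by norm_num) h4
        have h6 : (4 : ℕ) ≤ 2 ^ q := by
          calc (4 : ℕ) = 2 ^ 2 := by norm_num
            _ ≤ 2 ^ q := Nat.pow_le_pow_right (by norm_num) (by omega)
        rw [pow_add] at h5
        nlinarith
      · have hgle : g ≤ 13 := by omega
        interval_cases g
        · exact bound_of_le (ell_le_s11 7 2 ⟨![3, 1], ![0, 2], by decide, by decide⟩) (by norm_num)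
        · omega
        · exact bound_of_le (ell_le_s11 9 2 ⟨![1, 1], ![0, 3], by decide, by decide⟩) (by norm_num)
        · omega
        · exact bound_of_le (ell_le_s11 11 2 ⟨![3, 1], ![0, 3], by decide, by decide⟩) (by norm_num)
        · omega
        · exact bound_of_le (ell_le_s11 13 2 ⟨![1, 3], ![0, 2], by decide, by decide⟩) (by norm_num)

theorem stmt11 (k : ℕ) (hk : 0 < k) : k < 2 ^ obj ((2 * k + 2) / 3 + 1) := by
  unfold obj
  by_cases h : k ≤ 7
  · interval_cases k
    · exact lt_of_ell_le (c := 1) (ell_le_s11 2 1 ⟨![1], ![1], by decide, by decide⟩) (by norm_num)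
    · exact lt_of_ell_le (c := 1) (ell_le_s11 3 1 ⟨![3], ![0], by decide, by decide⟩) (by norm_num)
    · exact lt_of_ell_le (c := 1) (ell_le_s11 3 1 ⟨![3], ![0], by decide, by decide⟩) (by norm_num)
    · exact lt_of_ell_le (c := 1) (ell_le_s11 4 1 ⟨![1], ![2], by decide, by decide⟩) (by norm_num)
    · exact lt_of_ell_le (c := 2) (ell_le_s11 5 2 ⟨![1, 1], ![0, 2], by decide, by decide⟩) (by norm_num)
    · exact lt_of_ell_le (c := 2) (ell_le_s11 5 2 ⟨![1, 1], ![0, 2], by decide, by decide⟩) (by norm_num)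
    · exact lt_of_ell_le (c := 1) (ell_le_s11 6 1 ⟨![3], ![1], by decide, by decide⟩) (by norm_num)
  · have hg7 : 7 ≤ (2 * k + 2) / 3 + 1 := by omega
    have h2 := Dlem ((2 * k + 2) / 3 + 1) hg7
    omega
end

section
/- For every positive integer k, k ≤ 2^{o(⌈k/2⌉+1)}, with strict inequality for all k except k = 2, 4, 8. -/
lemma ell_le_of_rep (g k : ℕ) (a n : Fin k → ℕ)
    (h1 : ∀ i, a i = 1 ∨ a i = 3) (h2 : g = ∑ i, a i * 2 ^ n i) : ell g ≤ k :=
  Nat.sInf_le ⟨a, n, h1, h2⟩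

lemma ell_le_one (b p : ℕ) (hb : b = 1 ∨ b = 3) : ell (b * 2 ^ p) ≤ 1 :=
  ell_le_of_rep _ 1 (fun _ => b) (fun _ => p) (fun _ => hb) (by simp)

lemma ell_le_two (b c p q : ℕ) (hb : b = 1 ∨ b = 3) (hc : c = 1 ∨ c = 3) :
    ell (b * 2 ^ p + c * 2 ^ q) ≤ 2 :=
  ell_le_of_rep _ 2 ![b, c] ![p, q]
    (fun i => by fin_cases i <;> simp [hb, hc]) (by simp [Fin.sum_univ_two])

lemma exists_rep : ∀ g, 1 ≤ g → ∃ (k : ℕ) (a n : Fin k → ℕ),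
    (∀ i, a i = 1 ∨ a i = 3) ∧ g = ∑ i, a i * 2 ^ n i ∧ k ≤ Nat.log 2 g + 1 := by
  intro g
  induction g using Nat.strong_induction_on with
  | _ g ih =>
    intro hg
    set t := Nat.log 2 g with ht
    have h1 : 2 ^ t ≤ g := Nat.pow_log_le_self 2 (by omega)
    have h2 : g < 2 ^ (t + 1) := Nat.lt_pow_succ_log_self (by norm_num) g
    by_cases he : g = 2 ^ t
    · exact ⟨1, fun _ => 1, fun _ => t, fun _ => Or.inl rfl, by simp [he], by omega⟩
    · have hpt : 1 ≤ 2 ^ t := Nat.one_le_two_pow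
      have hg' : 1 ≤ g - 2 ^ t := by omega
      have hlt : g - 2 ^ t < g := by omega
      obtain ⟨k, a, n, ha, hsum, hk⟩ := ih (g - 2 ^ t) hlt hg'
      have hlog : Nat.log 2 (g - 2 ^ t) < t := by
        apply Nat.log_lt_of_lt_pow (by omega)
        have : 2 ^ (t + 1) = 2 * 2 ^ t := by ring
        omega
      refine ⟨k + 1, Fin.cons 1 a, Fin.cons t n, ?_, ?_, by omega⟩
      · intro i; refine Fin.cases (Or.inl rfl) (fun j => ha j) i
      · rw [Fin.sum_univ_succ]; simp only [Fin.cons_succ, Fin.cons_zero]; rw [← hsum]; omega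

lemma ell_le_log (g : ℕ) (hg : 1 ≤ g) : ell g ≤ Nat.log 2 g + 1 := by
  obtain ⟨k, a, n, ha, hs, hk⟩ := exists_rep g hg
  exact le_trans (ell_le_of_rep g k a n ha hs) hk

lemma two_pow_ge (t : ℕ) (ht : 4 ≤ t) : 2 * t + 3 ≤ 2 ^ t := by
  induction t, ht using Nat.le_induction with
  | base => norm_num
  | succ t ht ih =>
    have : 2 ^ (t + 1) = 2 * 2 ^ t := by ring
    omega

lemma log_arith (m : ℕ) (hm : 9 ≤ m) : 2 * Nat.log 2 m + 3 ≤ m := by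
  by_cases h : m ≤ 15
  · have : Nat.log 2 m < 4 := Nat.log_lt_of_lt_pow (by omega) (show m < 2 ^ 4 by norm_num; omega)
    omega
  · have h16 : (16 : ℕ) ≤ m := by omega
    have ht : 4 ≤ Nat.log 2 m := by
      have h24 : (2:ℕ) ^ 4 = 16 := by norm_num
      have : Nat.log 2 (2 ^ 4) ≤ Nat.log 2 m := Nat.log_mono_right (by omega)
      rwa [Nat.log_pow (by norm_num)] at this
    have := two_pow_ge _ ht
    have hp := Nat.pow_log_le_self 2 (show m ≠ 0 by omega)
    omega

lemma pow_obj_ge (g c : ℕ) (h : ell g ≤ c) : 2 ^ (g - c) ≤ 2 ^ obj g :=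
  Nat.pow_le_pow_right (by norm_num) (by unfold obj; omega)

theorem stmt15 (k : ℕ) (hk : 0 < k) :
    k ≤ 2 ^ obj ((k + 1) / 2 + 1) ∧
      (k ≠ 2 → k ≠ 4 → k ≠ 8 → k < 2 ^ obj ((k + 1) / 2 + 1)) := by
  by_cases hsmall : k ≤ 14
  · have e2 : ell 2 ≤ 1 := by simpa using ell_le_one 1 1 (Or.inl rfl)
    have e3 : ell 3 ≤ 1 := by simpa using ell_le_one 3 0 (Or.inr rfl)
    have e4 : ell 4 ≤ 1 := by simpa using ell_le_one 1 2 (Or.inl rfl)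
    have e5 : ell 5 ≤ 2 := by simpa using ell_le_two 1 1 2 0 (Or.inl rfl) (Or.inl rfl)
    have e6 : ell 6 ≤ 1 := by simpa using ell_le_one 3 1 (Or.inr rfl)
    have e7 : ell 7 ≤ 2 := by simpa using ell_le_two 3 1 1 0 (Or.inr rfl) (Or.inl rfl)
    have e8 : ell 8 ≤ 1 := by simpa using ell_le_one 1 3 (Or.inl rfl)
    have p2 := pow_obj_ge 2 1 e2
    have p3 := pow_obj_ge 3 1 e3
    have p4 := pow_obj_ge 4 1 e4
    have p5 := pow_obj_ge 5 2 e5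
    have p6 := pow_obj_ge 6 1 e6
    have p7 := pow_obj_ge 7 2 e7
    have p8 := pow_obj_ge 8 1 e8
    have o2 : 1 ≤ obj 2 := by unfold obj; omega
    norm_num at p2 p3 p4 p5 p6 p7 p8
    interval_cases k <;> norm_num <;> omega
  · have hm9 : 9 ≤ (k + 1) / 2 + 1 := by omega
    set m := (k + 1) / 2 + 1 with hm
    set t := Nat.log 2 m with ht
    have h2 : m < 2 ^ (t + 1) := Nat.lt_pow_succ_log_self (by norm_num) m
    have hell : ell m ≤ t + 1 := ell_le_log m (by omega)
    have harith := log_arith m hm9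
    have hobj : m - t - 1 ≤ obj m := by unfold obj; omega
    have hexp : t + 2 ≤ m - t - 1 := by omega
    have hpow : 2 ^ (t + 2) ≤ 2 ^ (m - t - 1) := Nat.pow_le_pow_right (by norm_num) hexp
    have hpow2 : 2 ^ (m - t - 1) ≤ 2 ^ obj m := Nat.pow_le_pow_right (by norm_num) hobj
    have hk2 : k ≤ 2 * m - 2 := by omega
    have h4 : 2 * m - 2 < 2 ^ (t + 2) := by
      have : 2 ^ (t + 2) = 2 * 2 ^ (t + 1) := by ring
      omega
    exact ⟨by omega, fun _ _ _ => by omega⟩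
end
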